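/- Let w ∈ P' and let i = |β(w)| be the length of the longest border of w. Then w[0..|w|-i-1] is a Lyndon word and w = (w[0..|w|-i-1])^q · w[0..r-1], where q = ⌊ |w| / (|w|-i) ⌋ and r = |w| mod (|w|-i). -/
import Mathlib


variable {α : Type*}

/-- The rotation `rot(w,i) = w[i..|w|-1] w[0..i-1]`. -/
def rot (w : List α) (i : ℕ) : List α := w.drop i ++ w.take i

/-- A Lyndon word: a nonempty word strictly smaller than all of its proper rotations. -/
def IsLyndon [LinearOrder α] (w : List α) : Prop :=
  w ≠ [] ∧ ∀ i, 0 < i → i < w.length → w < rot w i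

/-- `IsCFL w f` : `f` is the Chen–Fox–Lyndon factorization of `w`, i.e. a
nonincreasing sequence of Lyndon words whose concatenation is `w`. -/
def IsCFL [LinearOrder α] (w : List α) (f : List (List α)) : Prop :=
  f.flatten = w ∧ (∀ x ∈ f, IsLyndon x) ∧ f.Chain' (· ≥ ·)

/-- `u^k` : the `k`-fold concatenation of the word `u`. -/
def listPow (u : List α) (k : ℕ) : List α := (List.replicate k u).flatten

/-- `P`: the set of nonempty prefixes of Lyndon words. -/
def InP [LinearOrder α] (w : List α) : Prop :=
  w ≠ [] ∧ ∃ u : List α, IsLyndon (w ++ u)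

/-- `P' = P ∪ { c^k : k ≥ 2 }` where `c` is the maximum symbol of the alphabet. -/
def InP' [LinearOrder α] (w : List α) : Prop :=
  InP w ∨ ∃ (c : α) (k : ℕ), 2 ≤ k ∧ (∀ a : α, a ≤ c) ∧ w = List.replicate k c

/-- A border of `w`: a proper prefix of `w` that is also a suffix of `w`. -/
def IsBorder (b w : List α) : Prop := b <+: w ∧ b <:+ w ∧ b.length < w.length

/-- The length of the longest common prefix of two words. -/
def lcpLen [DecidableEq α] : List α → List α → ℕ
  | a :: u, b :: v => if a = b then lcpLen u v + 1 else 0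
  | _, _ => 0


set_option linter.unusedVariables false

private theorem getElem_idx_congr (l : List α) {i j : ℕ} (h : i = j) (hi : i < l.length) :
    l[i] = l[j]'(h ▸ hi) := by subst h; rfl

private theorem getElem_list_congr {l l' : List α} (h : l = l') (i : ℕ) (hi : i < l.length) :
    l[i] = l'[i]'(h ▸ hi) := by subst h; rfl

private theorem length_rot (l : List α) (i : ℕ) : (rot l i).length = l.length := by
  simp [rot]; omega

private theorem rot_getElem (l : List α) (i k : ℕ) (hi : i ≤ l.length)
    (hk : k < (rot l i).length) :
    (rot l i)[k] = l[(k + i) % l.length]'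
      (Nat.mod_lt _ (by rw [length_rot] at hk; omega)) := by
  rw [length_rot] at hk
  show (l.drop i ++ l.take i)[k]'(by simp [rot] at hk ⊢; omega) = _
  rcases lt_or_ge k (l.length - i) with h | h
  · have hd : k < (l.drop i).length := by rw [List.length_drop]; omega
    rw [List.getElem_append_left hd, List.getElem_drop]
    exact getElem_idx_congr l (by rw [Nat.mod_eq_of_lt (by omega : k + i < l.length)]; omega) _
  · have hd : (l.drop i).length ≤ k := by rw [List.length_drop]; omega
    rw [List.getElem_append_right hd]
    rw [List.getElem_take]
    apply getElem_idx_congr l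
    have h1 : k + i - l.length < i := by omega
    have : k + i = (k + i - l.length) + 1 * l.length := by omega
    rw [this, Nat.add_mul_mod_self_right, Nat.mod_eq_of_lt (by omega)]
    rw [List.length_drop]
    omega

private theorem listPow_succ (u : List α) (k : ℕ) :
    listPow u (k + 1) = u ++ listPow u k := by
  simp [listPow, List.replicate_succ]

private theorem listPow_length (u : List α) (k : ℕ) :
    (listPow u k).length = k * u.length := by
  induction k with
  | zero => simp [listPow]
  | succ n ih => rw [listPow_succ, List.length_append, ih]; ring

private theorem listPow_getElem (u : List α) (hu : 0 < u.length) :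
    ∀ (k m : ℕ) (hm : m < (listPow u k).length),
      (listPow u k)[m] = u[m % u.length]'(Nat.mod_lt _ hu)
  | 0, m, hm => by simp [listPow] at hm
  | k + 1, m, hm => by
    rw [getElem_list_congr (listPow_succ u k) m hm]
    rcases lt_or_ge m u.length with h | h
    · rw [List.getElem_append_left h]
      exact getElem_idx_congr u (Nat.mod_eq_of_lt h).symm _
    · rw [List.getElem_append_right h]
      rw [listPow_getElem u hu k (m - u.length)
        (by rw [listPow_succ, List.length_append] at hm; omega)]
      apply getElem_idx_congr u
      conv_rhs => rw [Nat.mod_eq_sub_mod h]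

private theorem my_lex_of_getElem [LinearOrder α] :
    ∀ (k : ℕ) (x y : List α) (hkx : k < x.length) (hky : k < y.length),
      (∀ (j : ℕ) (hjk : j < k) (hjx : j < x.length) (hjy : j < y.length), x[j] = y[j]) →
      x[k] < y[k] → x < y
  | 0, a :: x, b :: y, _, _, _, hlt => List.Lex.rel (by simpa using hlt)
  | k + 1, a :: x, b :: y, hkx, hky, hagree, hlt => by
    have h0 : a = b := by simpa using hagree 0 (Nat.succ_pos k) (Nat.succ_pos _) (Nat.succ_pos _)
    subst h0
    exact List.Lex.cons
      (my_lex_of_getElem k x y (Nat.lt_of_succ_lt_succ hkx) (Nat.lt_of_succ_lt_succ hky)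
        (fun j hjk hjx hjy => by
          simpa using hagree (j + 1) (Nat.succ_lt_succ hjk) (Nat.succ_lt_succ hjx)
            (Nat.succ_lt_succ hjy))
        (by simpa using hlt))

private theorem my_getElem_of_lex [LinearOrder α] :
    ∀ (k : ℕ) (x y : List α) (hkx : k < x.length) (hky : k < y.length),
      (∀ (j : ℕ) (hjk : j < k) (hjx : j < x.length) (hjy : j < y.length), x[j] = y[j]) →
      x[k] ≠ y[k] → x < y → x[k] < y[k]
  | 0, a :: x, b :: y, _, _, _, hne, hlt => by
    have hlt' : List.Lex (· < ·) (a :: x) (b :: y) := hlt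
    cases hlt' with
    | rel h => simpa using h
    | cons h => simp at hne
  | k + 1, a :: x, b :: y, hkx, hky, hagree, hne, hlt => by
    have h0 : a = b := by simpa using hagree 0 (Nat.succ_pos k) (Nat.succ_pos _) (Nat.succ_pos _)
    subst h0
    have hlt' : List.Lex (· < ·) (a :: x) (a :: y) := hlt
    cases hlt' with
    | rel h => exact absurd h (lt_irrefl a)
    | cons h =>
      simpa using my_getElem_of_lex k x y (Nat.lt_of_succ_lt_succ hkx)
        (Nat.lt_of_succ_lt_succ hky)
        (fun j hjk hjx hjy => by
          simpa using hagree (j + 1) (Nat.succ_lt_succ hjk) (Nat.succ_lt_succ hjx)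
            (Nat.succ_lt_succ hjy))
        (by simpa using hne) h


/-- For `w ∈ P'` with longest border of length `i`: `w[0..|w|-i-1]` is a Lyndon
word and `w = (w[0..|w|-i-1])^q · w[0..r-1]` with `q = ⌊|w|/(|w|-i)⌋` and
`r = |w| mod (|w|-i)`. -/
theorem P'_border_structure [LinearOrder α] (w : List α) (hw : InP' w)
    (b : List α) (hb : IsBorder b w)
    (hbmax : ∀ b' : List α, IsBorder b' w → b'.length ≤ b.length) :
    IsLyndon (w.take (w.length - b.length)) ∧
      w = listPow (w.take (w.length - b.length)) (w.length / (w.length - b.length)) ++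
        w.take (w.length % (w.length - b.length)) := by
  classical
  obtain ⟨hpre, hsuf, hblt⟩ := hb
  set p := w.length - b.length with hpdef
  have hp0 : 0 < p := by omega
  have hpn : p ≤ w.length := by omega
  have hvlen : (w.take p).length = p := by rw [List.length_take]; omega
  have hper : ∀ (k : ℕ) (h1 : k + p < w.length) (h2 : k < w.length),
      w[k + p]'h1 = w[k]'h2 := by
    intro k h1 h2
    have hkb : k < b.length := by omega
    have e1 : b[k]'hkb = w[k]'h2 := hpre.getElem hkb
    have e2 : b[k]'hkb = w[w.length - b.length + k]'(by omega) := hsuf.getElem hkb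
    rw [← e1, e2]
    exact getElem_idx_congr w (show k + p = w.length - b.length + k by omega) h1
  have hmod : ∀ (m : ℕ) (h : m < w.length),
      w[m] = w[m % p]'(lt_of_lt_of_le (Nat.mod_lt m hp0) hpn) := by
    intro m
    induction m using Nat.strong_induction_on with
    | _ m ih =>
      intro h
      rcases lt_or_ge m p with hmp | hmp
      · exact getElem_idx_congr w (Nat.mod_eq_of_lt hmp).symm h
      · have e1 : w[m] = w[m - p]'(by omega) := by
          rw [getElem_idx_congr w (show m = (m - p) + p by omega) h]
          exact hper (m - p) (by omega) (by omega)
        rw [e1, ih (m - p) (by omega) (by omega)]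
        exact getElem_idx_congr w (Nat.mod_eq_sub_mod hmp).symm _
  have hq' : w.length % p + w.length / p * p = w.length := Nat.mod_add_div' _ _
  have hr : w.length % p < p := Nat.mod_lt _ hp0
  have hA : (listPow (w.take p) (w.length / p)).length = (w.length / p) * p := by
    rw [listPow_length, hvlen]
  have hdecomp : w = listPow (w.take p) (w.length / p) ++ w.take (w.length % p) := by
    apply List.ext_getElem
    · rw [List.length_append, hA, List.length_take]
      omega
    · intro m hm hm2
      rcases lt_or_ge m ((w.length / p) * p) with h | h
      · have e0 : (listPow (w.take p) (w.length / p) ++ w.take (w.length % p))[m]'hm2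
            = (listPow (w.take p) (w.length / p))[m]'(by rw [hA]; exact h) :=
          List.getElem_append_left (by rw [hA]; exact h)
        rw [e0, listPow_getElem (w.take p) (by rw [hvlen]; exact hp0) _ m (by rw [hA]; exact h)]
        rw [getElem_idx_congr (w.take p)
          (show m % (w.take p).length = m % p by rw [hvlen]) _]
        rw [List.getElem_take]
        exact hmod m hm
      · have hAle : (listPow (w.take p) (w.length / p)).length ≤ m := by rw [hA]; exact h
        have hlt : m - (w.length / p) * p < w.length % p := by omega
        have e0 : (listPow (w.take p) (w.length / p) ++ w.take (w.length % p))[m]'hm2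
            = (w.take (w.length % p))[m - (w.length / p) * p]'
                (by rw [List.length_take]; omega) := by
          rw [List.getElem_append_right hAle]
          exact getElem_idx_congr _ (by rw [hA]) _
        have hidx : m % p = m - (w.length / p) * p := by
          have hd : m = (m - (w.length / p) * p) + (w.length / p) * p := by omega
          conv_lhs => rw [hd]
          rw [Nat.add_mul_mod_self_right, Nat.mod_eq_of_lt (by omega)]
        rw [e0, List.getElem_take, hmod m hm]
        exact getElem_idx_congr w hidx _
  refine ⟨⟨?_, ?_⟩, hdecomp⟩
  · intro hnil
    rw [hnil] at hvlen
    simp at hvlen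
    omega
  · intro i hi0 hip
    rw [hvlen] at hip
    have hnotper : ¬ (∀ (k : ℕ) (h1 : k + i < w.length) (h2 : k < w.length),
        w[k + i]'h1 = w[k]'h2) := by
      intro hall
      have hdt : w.take (w.length - i) = w.drop i := by
        apply List.ext_getElem
        · rw [List.length_take, List.length_drop]; omega
        · intro m hm1 hm2
          rw [List.length_take] at hm1
          rw [List.getElem_take, List.getElem_drop,
            getElem_idx_congr w (show i + m = m + i by omega) (by omega)]
          exact (hall m (by omega) (by omega)).symm
      have hbord : IsBorder (w.take (w.length - i)) w := by
        refine ⟨List.take_prefix _ _, ?_, ?_⟩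
        · rw [hdt]; exact List.drop_suffix _ _
        · rw [List.length_take]; omega
      have := hbmax _ hbord
      rw [List.length_take] at this
      omega
    obtain ⟨j, hjspec, hminj⟩ : ∃ j, (∃ (h1 : j + i < w.length) (h2 : j < w.length),
          w[j + i]'h1 ≠ w[j]'h2) ∧
        ∀ k, k < j → ∀ (hk1 : k + i < w.length) (hk2 : k < w.length),
          w[k + i]'hk1 = w[k]'hk2 := by
      have hex : ∃ k, ∃ (h1 : k + i < w.length) (h2 : k < w.length),
          w[k + i]'h1 ≠ w[k]'h2 := by
        by_contra hno
        push_neg at hno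
        exact hnotper fun k h1 h2 => hno k h1 h2
      refine ⟨Nat.find hex, Nat.find_spec hex, ?_⟩
      intro k hk hk1 hk2
      have h := Nat.find_min hex hk
      push_neg at h
      exact h hk1 hk2
    obtain ⟨h1, h2, hne⟩ := hjspec
    have hjp : j < p := by
      by_contra hge
      push_neg at hge
      apply hne
      have e1 : w[j + i]'h1 = w[(j - p) + i]'(by omega) := by
        rw [getElem_idx_congr w (show j + i = ((j - p) + i) + p by omega) h1]
        exact hper ((j - p) + i) (by omega) (by omega)
      have e2 : w[j]'h2 = w[j - p]'(by omega) := by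
        rw [getElem_idx_congr w (show j = (j - p) + p by omega) h2]
        exact hper (j - p) (by omega) (by omega)
      rw [e1, e2]
      exact hminj (j - p) (by omega) (by omega) (by omega)
    rcases hw with ⟨hwne, u, hLy⟩ | ⟨c, k, hk2, hcmax, hwc⟩
    · -- w is a prefix of the Lyndon word w ++ u
      have hNw : w.length ≤ (w ++ u).length := by rw [List.length_append]; omega
      have hNl : i < (w ++ u).length := by omega
      have hLlt : (w ++ u) < rot (w ++ u) i := hLy.2 i hi0 hNl
      have hkey : w[j]'h2 < w[j + i]'h1 := by
        have hx : j < (w ++ u).length := by omega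
        have hy : j < (rot (w ++ u) i).length := by rw [length_rot]; omega
        have hredy : ∀ (m : ℕ) (hmi : m + i < w.length)
            (hmy : m < (rot (w ++ u) i).length),
            (rot (w ++ u) i)[m] = w[m + i]'hmi := by
          intro m hmi hmy
          rw [rot_getElem (w ++ u) i m (by omega) hmy,
            getElem_idx_congr (w ++ u)
              (show (m + i) % (w ++ u).length = m + i from
                Nat.mod_eq_of_lt (by omega)) _,
            List.getElem_append_left (show m + i < w.length by omega)]
        have agree : ∀ (m : ℕ) (hm : m < j) (hmx : m < (w ++ u).length)
            (hmy : m < (rot (w ++ u) i).length),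
            (w ++ u)[m] = (rot (w ++ u) i)[m] := by
          intro m hm hmx hmy
          rw [hredy m (by omega) hmy,
            List.getElem_append_left (show m < w.length by omega)]
          exact (hminj m hm (by omega) (by omega)).symm
        have hne2 : (w ++ u)[j]'hx ≠ (rot (w ++ u) i)[j]'hy := by
          rw [hredy j h1 hy, List.getElem_append_left (show j < w.length by omega)]
          exact fun hcon => hne (hcon.symm)
        have hfin := my_getElem_of_lex j (w ++ u) (rot (w ++ u) i) hx hy agree hne2 hLlt
        rwa [hredy j h1 hy, List.getElem_append_left (show j < w.length by omega)] at hfin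
      have hredv : ∀ (m : ℕ) (hmi : m + i < w.length)
          (hmy : m < (rot (w.take p) i).length),
          (rot (w.take p) i)[m] = w[m + i]'hmi := by
        intro m hmi hmy
        rw [rot_getElem (w.take p) i m (by rw [hvlen]; omega) hmy,
          getElem_idx_congr (w.take p)
            (show (m + i) % (w.take p).length = (m + i) % p by rw [hvlen]) _,
          List.getElem_take]
        exact (hmod (m + i) hmi).symm
      apply my_lex_of_getElem j (w.take p) (rot (w.take p) i)
        (by rw [hvlen]; omega) (by rw [length_rot, hvlen]; omega)
      · intro m hm hmx hmy
        rw [hredv m (by omega) hmy, List.getElem_take]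
        exact (hminj m hm (by omega) (by omega)).symm
      · rw [hredv j h1 (by rw [length_rot, hvlen]; omega), List.getElem_take]
        exact hkey
    · -- w = c^k : then p = 1, contradicting 0 < i < p
      exfalso
      have hb' : IsBorder (List.replicate (k - 1) c) w := by
        refine ⟨⟨[c], ?_⟩, ⟨[c], ?_⟩, ?_⟩
        · rw [hwc, show [c] = List.replicate 1 c from rfl, ← List.replicate_add]
          congr 1
          omega
        · rw [hwc, show [c] = List.replicate 1 c from rfl, ← List.replicate_add]
          congr 1
          omega
        · rw [hwc]; simp; omega
      have hble := hbmax _ hb'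
      have hwl : w.length = k := by rw [hwc]; simp
      simp only [List.length_replicate] at hble
      omega
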